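/- Under Assumption 2.1, the step-size bound 0 < w ≤ min{1, 𝔡/√(2β⁻¹(J(z⁰) − inf F)), (β − ε)/(2C·A_max)} for some β, ε > 0, and sequences (z^k), (x̃^k) as in Theorem 2.1 (z^{k+1} = (1 − w)z^k + w·x̃^k, J̃_{z^k}(x̃^k) ≤ J̃_{z^k}(z^k), e^k ∈ ∂J̃_{z^k}(x̃^k) with e^k → 0), let L := lim_k J(z^k) and V_L := {x : −A'(x)*A(x) ∈ ∂F(x) and J(x) = L}. Suppose V_L = U₁ ∪ U₂ for disjoint closed sets U₁, U₂. Then any two accumulation points x̂₁, x̂₂ of (z^k) lie in the same set U_j: it is impossible that x̂₁ ∈ U₁ and x̂₂ ∈ U₂ (Theorem 2.1(iii)). -/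

import Mathlib

open Filter Topology Metric Bornology
open scoped RealInnerProductSpace

/-- The objective `J(x) = (1/2)‖A(x)‖² + F(x)` with extended-real-valued `F`. -/
noncomputable def Jobj {N M : ℕ} (F : EuclideanSpace ℝ (Fin N) → EReal)
    (A : EuclideanSpace ℝ (Fin N) → EuclideanSpace ℝ (Fin M))
    (x : EuclideanSpace ℝ (Fin N)) : EReal :=
  ((1 / 2 * ‖A x‖ ^ 2 : ℝ) : EReal) + F x

/-- The linearisation `A_z(x) = A(z) + A'(z)(x − z)`. -/
noncomputable def Alin {N M : ℕ}
    (A : EuclideanSpace ℝ (Fin N) → EuclideanSpace ℝ (Fin M))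
    (A' : EuclideanSpace ℝ (Fin N) → (EuclideanSpace ℝ (Fin N) →L[ℝ] EuclideanSpace ℝ (Fin M)))
    (z x : EuclideanSpace ℝ (Fin N)) : EuclideanSpace ℝ (Fin M) :=
  A z + A' z (x - z)

/-- The linearised objective `J_z(x) = (1/2)‖A_z(x)‖² + F(x)`. -/
noncomputable def Jlin {N M : ℕ} (F : EuclideanSpace ℝ (Fin N) → EReal)
    (A : EuclideanSpace ℝ (Fin N) → EuclideanSpace ℝ (Fin M))
    (A' : EuclideanSpace ℝ (Fin N) → (EuclideanSpace ℝ (Fin N) →L[ℝ] EuclideanSpace ℝ (Fin M)))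
    (z x : EuclideanSpace ℝ (Fin N)) : EReal :=
  ((1 / 2 * ‖Alin A A' z x‖ ^ 2 : ℝ) : EReal) + F x

/-- The proximally relaxed linearised objective `J̃_z(x) = J_z(x) + (β/2)‖x − z‖²`. -/
noncomputable def Jprox {N M : ℕ} (F : EuclideanSpace ℝ (Fin N) → EReal)
    (A : EuclideanSpace ℝ (Fin N) → EuclideanSpace ℝ (Fin M))
    (A' : EuclideanSpace ℝ (Fin N) → (EuclideanSpace ℝ (Fin N) →L[ℝ] EuclideanSpace ℝ (Fin M)))
    (β : ℝ) (z x : EuclideanSpace ℝ (Fin N)) : EReal :=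
  Jlin F A A' z x + ((β / 2 * ‖x - z‖ ^ 2 : ℝ) : EReal)

/-!
The relaxed step `z ↦ (1 - w) z + w x̃` decreases `J` by at least `(w ε / 2) ‖x̃ - z‖²`: the
linearised model `J̃_z(x̃) ≤ J(z)` controls `J` at the new point up to the linearisation error of
`A`, which the step-size bound makes small (it also keeps the new point in the ball of radius `𝔡`
where that error is quadratic). Hence `J(z^k) ↓ L`, `‖x̃^k - z^k‖ → 0` and `J̃_{z^k}(x̃^k) → L`.
Passing to the limit in the inexact optimality of `x̃^k` shows that every cluster point `p` has
`J(p) = L` and minimises `J̃_p`, whose first-order condition is `-A'(p)^* A(p) ∈ ∂F(p)`; so all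
cluster points lie in `V_L = U₁ ∪ U₂`. Finally, since the steps `z^{k+1} - z^k` tend to zero, the
continuous function `dist(·, U₁) - dist(·, U₂)`, negative on `U₁` and positive on `U₂`, is
frequently almost zero along the bounded sequence when both sets contain cluster points; this
produces a cluster point at which it vanishes, which lies in neither set.
-/

open Set

theorem exists_abs_le_of_neg_of_nonneg {a : ℕ → ℝ} {η : ℝ} {m n : ℕ} (hmn : m ≤ n)
    (hm : a m < 0) (hn : 0 ≤ a n) (hstep : ∀ k, m ≤ k → |a (k + 1) - a k| ≤ η) :
    ∃ k, m ≤ k ∧ |a k| ≤ η := by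
  induction n, hmn using Nat.le_induction with
  | base => exact absurd hn hm.not_ge
  | succ n hmn ih =>
    by_cases han : 0 ≤ a n
    · exact ih han
    · refine ⟨n + 1, by omega, ?_⟩
      rw [abs_of_nonneg hn]
      linarith [le_of_abs_le (hstep n hmn)]

theorem frequently_abs_le_of_tendsto_sub {a : ℕ → ℝ}
    (hstep : Tendsto (fun k => a (k + 1) - a k) atTop (𝓝 0))
    (hneg : ∃ᶠ k in atTop, a k < 0) (hpos : ∃ᶠ k in atTop, 0 < a k) {η : ℝ} (hη : 0 < η) :
    ∃ᶠ k in atTop, |a k| ≤ η := by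
  obtain ⟨K, hK⟩ := eventually_atTop.1 <|
    (tendsto_zero_iff_abs_tendsto_zero _).1 hstep |>.eventually (ge_mem_nhds hη)
  refine frequently_atTop.2 fun n => ?_
  obtain ⟨m, hnm, hm⟩ := frequently_atTop.1 hneg (max n K)
  obtain ⟨l, hml, hl⟩ := frequently_atTop.1 hpos m
  obtain ⟨k, hmk, hk⟩ := exists_abs_le_of_neg_of_nonneg hml hm hl.le
    fun k hk => hK k (by omega)
  exact ⟨k, by omega, hk⟩

theorem exists_mapClusterPt_of_frequently_abs_le {X : Type*} [PseudoMetricSpace X]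
    [ProperSpace X] {u : ℕ → X} (hu : IsBounded (range u)) {g : X → ℝ} (hg : Continuous g)
    (h : ∀ η > 0, ∃ᶠ k in atTop, |g (u k)| ≤ η) :
    ∃ p, MapClusterPt p atTop u ∧ g p = 0 := by
  obtain ⟨φ, hφ, hφg⟩ := extraction_forall_of_frequently fun n : ℕ =>
    h (1 / (n + 1)) Nat.one_div_pos_of_nat
  obtain ⟨p, -, ψ, hψ, hp⟩ := tendsto_subseq_of_bounded hu fun n => mem_range_self (φ n)
  refine ⟨p, hp.mapClusterPt.of_comp (hφ.comp hψ).tendsto_atTop, ?_⟩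
  refine tendsto_nhds_unique ((hg.tendsto p).comp hp) (squeeze_zero_norm (fun n => hφg (ψ n)) ?_)
  exact tendsto_one_div_add_atTop_nhds_zero_nat.comp hψ.tendsto_atTop

theorem not_mem_and_mem_of_mapClusterPt {X : Type*} [PseudoMetricSpace X] [ProperSpace X]
    {u : ℕ → X} (hu : IsBounded (range u))
    (hstep : Tendsto (fun k => dist (u (k + 1)) (u k)) atTop (𝓝 0))
    {U₁ U₂ : Set X} (hU₁ : IsClosed U₁) (hU₂ : IsClosed U₂) (hdisj : Disjoint U₁ U₂)
    (hclu : ∀ p, MapClusterPt p atTop u → p ∈ U₁ ∪ U₂) {x₁ x₂ : X}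
    (hx₁ : MapClusterPt x₁ atTop u) (hx₂ : MapClusterPt x₂ atTop u) :
    ¬(x₁ ∈ U₁ ∧ x₂ ∈ U₂) := by
  rintro ⟨hx₁U, hx₂U⟩
  set g : X → ℝ := fun x => infDist x U₁ - infDist x U₂
  have hg : LipschitzWith 2 g := by
    simpa [one_add_one_eq_two] using (lipschitz_infDist_pt U₁).sub (lipschitz_infDist_pt U₂)
  have hg₁ : ∀ x ∈ U₁, g x < 0 := fun x hx => by
    have := (hU₂.notMem_iff_infDist_pos ⟨x₂, hx₂U⟩).1 (hdisj.notMem_of_mem_left hx)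
    simp [g, infDist_zero_of_mem hx, this]
  have hg₂ : ∀ x ∈ U₂, 0 < g x := fun x hx => by
    have := (hU₁.notMem_iff_infDist_pos ⟨x₁, hx₁U⟩).1 (hdisj.notMem_of_mem_right hx)
    simp [g, infDist_zero_of_mem hx, this]
  have hgstep : Tendsto (fun k => g (u (k + 1)) - g (u k)) atTop (𝓝 0) := by
    refine squeeze_zero_norm (fun k => ?_) (by simpa using hstep.const_mul 2)
    simpa [Real.dist_eq] using hg.dist_le_mul (u (k + 1)) (u k)
  have hneg : ∃ᶠ k in atTop, g (u k) < 0 :=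
    hx₁.frequently (hg.continuous.continuousAt.eventually_lt continuousAt_const (hg₁ x₁ hx₁U))
  have hpos : ∃ᶠ k in atTop, 0 < g (u k) :=
    hx₂.frequently (continuousAt_const.eventually_lt hg.continuous.continuousAt (hg₂ x₂ hx₂U))
  obtain ⟨p, hp, hgp⟩ := exists_mapClusterPt_of_frequently_abs_le hu hg.continuous
    fun η hη => frequently_abs_le_of_tendsto_sub hgstep hneg hpos hη
  rcases hclu p hp with hpU | hpU
  · exact (hg₁ p hpU).ne hgp
  · exact (hg₂ p hpU).ne' hgp

theorem tendsto_zero_of_le_sub_succ {u a : ℕ → ℝ} {L : ℝ} (hu : ∀ k, 0 ≤ u k)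
    (h : ∀ k, u k ≤ a k - a (k + 1)) (ha : Tendsto a atTop (𝓝 L)) : Tendsto u atTop (𝓝 0) :=
  squeeze_zero hu h (by simpa using ha.sub (ha.comp (tendsto_add_atTop_nat 1)))

theorem tendsto_of_relaxed_descent {a b d : ℕ → ℝ} {w c L : ℝ} (hw : 0 < w) (hc : 0 < c)
    (hba : ∀ k, b k ≤ a k) (hdesc : ∀ k, a (k + 1) ≤ (1 - w) * a k + w * b k - c * d k ^ 2)
    (ha : Tendsto a atTop (𝓝 L)) : Tendsto d atTop (𝓝 0) ∧ Tendsto b atTop (𝓝 L) := by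
  have hsq : Tendsto (fun k => c * d k ^ 2) atTop (𝓝 0) :=
    tendsto_zero_of_le_sub_succ (fun k => by positivity)
      (fun k => by nlinarith [hba k, hdesc k]) ha
  have hgap : Tendsto (fun k => w * (a k - b k)) atTop (𝓝 0) :=
    tendsto_zero_of_le_sub_succ (fun k => mul_nonneg hw.le (sub_nonneg.2 (hba k)))
      (fun k => by nlinarith [hdesc k, sq_nonneg (d k)]) ha
  constructor
  · have hd2 : Tendsto (fun k => d k ^ 2) atTop (𝓝 0) := by
      simpa [hc.ne'] using hsq.const_mul c⁻¹
    exact (tendsto_zero_iff_abs_tendsto_zero d).2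
      (by simpa [Function.comp_def, Real.sqrt_sq_eq_abs] using hd2.sqrt)
  · have hab : Tendsto (fun k => a k - b k) atTop (𝓝 0) := by
      simpa [hw.ne'] using hgap.const_mul w⁻¹
    simpa using ha.sub hab

theorem exists_eq_coe_of_tendsto_coe {u : ℕ → ℝ} {L : EReal} {lo hi : ℝ}
    (h : Tendsto (fun k => (u k : EReal)) atTop (𝓝 L)) (hlo : ∀ k, lo ≤ u k)
    (hhi : ∀ k, u k ≤ hi) : ∃ ℓ : ℝ, L = ℓ ∧ Tendsto u atTop (𝓝 ℓ) := by
  have hL_hi : L ≤ hi := le_of_tendsto' h fun k => EReal.coe_le_coe (hhi k)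
  have hL_lo : (lo : EReal) ≤ L := ge_of_tendsto' h fun k => EReal.coe_le_coe (hlo k)
  have hL : L = (L.toReal : EReal) :=
    (EReal.coe_toReal (ne_top_of_le_ne_top (EReal.coe_ne_top _) hL_hi)
      (ne_bot_of_le_ne_bot (EReal.coe_ne_bot _) hL_lo)).symm
  exact ⟨L.toReal, hL, EReal.tendsto_coe.1 (hL ▸ h)⟩

theorem LowerSemicontinuous.le_of_tendsto {X γ ι : Type*} [TopologicalSpace X] [LinearOrder γ]
    [DenselyOrdered γ] [TopologicalSpace γ] [OrderTopology γ] {f : X → γ}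
    (hf : LowerSemicontinuous f) {l : Filter ι} [l.NeBot] {u : ι → X} {p : X} {ℓ : γ}
    (hu : Tendsto u l (𝓝 p)) (hfu : Tendsto (fun k => f (u k)) l (𝓝 ℓ)) : f p ≤ ℓ :=
  le_of_forall_gt_imp_ge_of_dense fun _ hc => (hf.isClosed_preimage _).mem_of_tendsto hu
    ((hfu.eventually (gt_mem_nhds hc)).mono fun _ => le_of_lt)

theorem nonpos_of_forall_le_mul {a c : ℝ} (h : ∀ t, 0 < t → t ≤ 1 → a ≤ t * c) : a ≤ 0 := by
  have hlim : Tendsto (fun t : ℝ => t * c) (𝓝 0) (𝓝 0) := by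
    simpa using (continuous_mul_const c).tendsto 0
  refine ge_of_tendsto (hlim.mono_left (nhdsWithin_le_nhds (s := Ioi 0))) ?_
  filter_upwards [Ioc_mem_nhdsGT (zero_lt_one' ℝ)] with t ht using h t ht.1 ht.2

theorem sq_norm_sub_sq_norm_le {E : Type*} [NormedAddCommGroup E] [InnerProductSpace ℝ E]
    (a b : E) : ‖a‖ ^ 2 - ‖b‖ ^ 2 ≤ 2 * ‖a‖ * ‖a - b‖ := by
  have hb : ‖a - (a - b)‖ ^ 2 = ‖a‖ ^ 2 - 2 * ⟪a, a - b⟫ + ‖a - b‖ ^ 2 := norm_sub_sq_real _ _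
  rw [sub_sub_cancel] at hb
  nlinarith [real_inner_le_norm a (a - b), sq_nonneg ‖a - b‖]

theorem mul_le_of_pos_of_le_div {a b c : ℝ} (ha : 0 < a) (hc : 0 ≤ c) (h : a ≤ b / c) :
    c * a ≤ b := by
  rcases hc.eq_or_lt with rfl | hc
  · rw [div_zero] at h
    exact absurd ha h.not_gt
  · rwa [le_div_iff₀' hc] at h

theorem mul_le_of_le_div_sqrt {β w dd d K : ℝ} (hβ : 0 < β) (hw : 0 < w)
    (hwD : w ≤ dd / √(2 * β⁻¹ * K)) (hd : β / 2 * d ^ 2 ≤ K) : w * d ≤ dd := by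
  have hdD : d ≤ √(2 * β⁻¹ * K) := by
    refine Real.le_sqrt_of_sq_le ?_
    calc d ^ 2 = 2 * β⁻¹ * (β / 2 * d ^ 2) := by field_simp
      _ ≤ 2 * β⁻¹ * K := by gcongr
  calc w * d ≤ w * √(2 * β⁻¹ * K) := by gcongr
    _ = √(2 * β⁻¹ * K) * w := mul_comm _ _
    _ ≤ dd := mul_le_of_pos_of_le_div hw (Real.sqrt_nonneg _) hwD

theorem norm_sub_of_eq_convex_comb {E : Type*} [SeminormedAddCommGroup E] [NormedSpace ℝ E]
    {x z z' : E} {w : ℝ} (hz' : z' = (1 - w) • z + w • x) (hw : 0 ≤ w) :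
    ‖z' - z‖ = w * ‖x - z‖ := by
  rw [hz', show (1 - w) • z + w • x - z = w • (x - z) by module, norm_smul,
    Real.norm_of_nonneg hw]

theorem convexOn_toReal {E : Type*} [AddCommGroup E] [Module ℝ E] {F : E → EReal}
    (hFconv : ∀ x y : E, ∀ a b : ℝ, 0 ≤ a → 0 ≤ b → a + b = 1 →
      F (a • x + b • y) ≤ (a : EReal) * F x + (b : EReal) * F y)
    (hFnebot : ∀ x, F x ≠ ⊥) : ConvexOn ℝ {x | F x ≠ ⊤} fun x => (F x).toReal := by
  have key : ∀ x, F x ≠ ⊤ → ∀ y, F y ≠ ⊤ → ∀ a b : ℝ, 0 ≤ a → 0 ≤ b → a + b = 1 →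
      F (a • x + b • y) ≤ ((a * (F x).toReal + b * (F y).toReal : ℝ) : EReal) := by
    intro x hx y hy a b ha hb hab
    simpa [EReal.coe_toReal hx (hFnebot x), EReal.coe_toReal hy (hFnebot y)] using
      hFconv x y a b ha hb hab
  refine ⟨fun x hx y hy a b ha hb hab => ?_, fun x hx y hy a b ha hb hab => ?_⟩
  · exact ne_top_of_le_ne_top (EReal.coe_ne_top _) (key x hx y hy a b ha hb hab)
  · exact (EReal.toReal_le_toReal (key x hx y hy a b ha hb hab) (hFnebot _)
      (EReal.coe_ne_top _)).trans_eq (EReal.toReal_coe _)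

section Objective

variable {N M : ℕ} {F : EuclideanSpace ℝ (Fin N) → EReal}
  {A : EuclideanSpace ℝ (Fin N) → EuclideanSpace ℝ (Fin M)}
  {A' : EuclideanSpace ℝ (Fin N) → (EuclideanSpace ℝ (Fin N) →L[ℝ] EuclideanSpace ℝ (Fin M))}
  {β : ℝ} {x z : EuclideanSpace ℝ (Fin N)}

theorem Jobj_eq_coe (hx : F x ≠ ⊤) (hx' : F x ≠ ⊥) :
    Jobj F A x = ((1 / 2 * ‖A x‖ ^ 2 + (F x).toReal : ℝ) : EReal) := by
  rw [Jobj, EReal.coe_add, EReal.coe_toReal hx hx']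

theorem Jprox_eq_coe (hx : F x ≠ ⊤) (hx' : F x ≠ ⊥) :
    Jprox F A A' β z x =
      ((1 / 2 * ‖Alin A A' z x‖ ^ 2 + (F x).toReal + β / 2 * ‖x - z‖ ^ 2 : ℝ) : EReal) := by
  rw [Jprox, Jlin, EReal.coe_add, EReal.coe_add, EReal.coe_toReal hx hx']

theorem toReal_Jobj (hx : F x ≠ ⊤) (hx' : F x ≠ ⊥) :
    (Jobj F A x).toReal = 1 / 2 * ‖A x‖ ^ 2 + (F x).toReal := by
  rw [Jobj_eq_coe hx hx', EReal.toReal_coe]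

theorem toReal_Jprox (hx : F x ≠ ⊤) (hx' : F x ≠ ⊥) :
    (Jprox F A A' β z x).toReal =
      1 / 2 * ‖Alin A A' z x‖ ^ 2 + (F x).toReal + β / 2 * ‖x - z‖ ^ 2 := by
  rw [Jprox_eq_coe hx hx', EReal.toReal_coe]

theorem le_Jobj : F x ≤ Jobj F A x :=
  le_add_of_nonneg_left (EReal.coe_nonneg.2 (by positivity))

theorem le_toReal_Jobj {m : ℝ} (hm : ∀ x, (m : EReal) ≤ F x) (hx : F x ≠ ⊤) (hx' : F x ≠ ⊥) :
    m ≤ (Jobj F A x).toReal := by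
  have hmx := EReal.coe_le_coe_iff.1 ((hm x).trans (EReal.le_coe_toReal hx))
  rw [toReal_Jobj hx hx']
  nlinarith [sq_nonneg ‖A x‖]

theorem coe_toReal_Jobj (hx : F x ≠ ⊤) (hx' : F x ≠ ⊥) :
    ((Jobj F A x).toReal : EReal) = Jobj F A x := by
  rw [Jobj_eq_coe hx hx', EReal.toReal_coe]

theorem Jobj_le_Jobj_iff {y : EuclideanSpace ℝ (Fin N)} (hx : F x ≠ ⊤) (hx' : F x ≠ ⊥)
    (hy : F y ≠ ⊤) (hy' : F y ≠ ⊥) :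
    Jobj F A x ≤ Jobj F A y ↔ (Jobj F A x).toReal ≤ (Jobj F A y).toReal := by
  rw [← coe_toReal_Jobj hx hx', ← coe_toReal_Jobj hy hy', EReal.coe_le_coe_iff,
    EReal.toReal_coe, EReal.toReal_coe]

theorem Jprox_self : Jprox F A A' β x x = Jobj F A x := by
  simp [Jprox, Jlin, Jobj, Alin]

theorem Jprox_eq_top (hx : F x = ⊤) : Jprox F A A' β z x = ⊤ := by
  rw [Jprox, Jlin, hx, EReal.coe_add_top, EReal.top_add_coe]

theorem ne_top_of_Jprox_le {r : ℝ} (h : Jprox F A A' β z x ≤ r) : F x ≠ ⊤ := fun hx =>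
  EReal.coe_ne_top r (top_le_iff.1 (Jprox_eq_top hx ▸ h))

end Objective

section Descent

variable {N M : ℕ} {F : EuclideanSpace ℝ (Fin N) → EReal}
  {A : EuclideanSpace ℝ (Fin N) → EuclideanSpace ℝ (Fin M)}
  {A' : EuclideanSpace ℝ (Fin N) → (EuclideanSpace ℝ (Fin N) →L[ℝ] EuclideanSpace ℝ (Fin M))}
  {β ε w C Amax : ℝ} {x z z' : EuclideanSpace ℝ (Fin N)}

theorem descent_inequality {f : EuclideanSpace ℝ (Fin N) → ℝ} (hz' : z' = (1 - w) • z + w • x)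
    (hw0 : 0 ≤ w) (hw1 : w ≤ 1) (hwA : 2 * C * Amax * w ≤ β - ε)
    (hf : f z' ≤ (1 - w) * f z + w * f x) (hA : ‖A z'‖ ≤ Amax)
    (herr : ‖A z' - Alin A A' z z'‖ ≤ C * ‖z' - z‖ ^ 2) :
    1 / 2 * ‖A z'‖ ^ 2 + f z' ≤
      (1 - w) * (1 / 2 * ‖A z‖ ^ 2 + f z) +
        w * (1 / 2 * ‖Alin A A' z x‖ ^ 2 + f x + β / 2 * ‖x - z‖ ^ 2) -
          w * ε / 2 * ‖x - z‖ ^ 2 := by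
  have hstep : z' - z = w • (x - z) := by rw [hz']; module
  have hlin : Alin A A' z z' = (1 - w) • A z + w • Alin A A' z x := by
    rw [Alin, Alin, hstep, map_smul]; module
  have hcvx : ‖Alin A A' z z'‖ ^ 2 ≤ (1 - w) * ‖A z‖ ^ 2 + w * ‖Alin A A' z x‖ ^ 2 := by
    rw [hlin]
    exact (convexOn_univ_norm.pow (fun _ _ => norm_nonneg _) 2).2 trivial trivial
      (by linarith) hw0 (by ring)
  have hnorm : ‖z' - z‖ = w * ‖x - z‖ := norm_sub_of_eq_convex_comb hz' hw0
  -- the linearisation error costs at most `2 Amax C w² ‖x - z‖²`, which `hwA` absorbs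
  have herr' : ‖A z'‖ ^ 2 - ‖Alin A A' z z'‖ ^ 2 ≤ w * (β - ε) * ‖x - z‖ ^ 2 :=
    calc ‖A z'‖ ^ 2 - ‖Alin A A' z z'‖ ^ 2 ≤ 2 * ‖A z'‖ * ‖A z' - Alin A A' z z'‖ :=
          sq_norm_sub_sq_norm_le _ _
      _ ≤ 2 * Amax * (C * (w * ‖x - z‖) ^ 2) := by
          rw [← hnorm]; gcongr; linarith [norm_nonneg (A z')]
      _ = (2 * C * Amax * w) * (w * ‖x - z‖ ^ 2) := by ring
      _ ≤ (β - ε) * (w * ‖x - z‖ ^ 2) := by gcongr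
      _ = w * (β - ε) * ‖x - z‖ ^ 2 := by ring
  nlinarith

theorem descent_step {dd m c : ℝ}
    (hconv : ConvexOn ℝ {x | F x ≠ ⊤} fun x => (F x).toReal) (hFnebot : ∀ x, F x ≠ ⊥)
    (hm : ∀ x, (m : EReal) ≤ F x) (hAmax : ∀ x, F x ≠ ⊤ → ‖A x‖ ≤ Amax)
    (herr : ∀ y ∈ closedBall z dd, ‖A y - Alin A A' z y‖ ≤ C * ‖y - z‖ ^ 2)
    (hβ : 0 < β) (hw0 : 0 < w) (hw1 : w ≤ 1) (hw2 : w ≤ dd / √(2 * β⁻¹ * (c - m)))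
    (hwA : 2 * C * Amax * w ≤ β - ε) (hz' : z' = (1 - w) • z + w • x)
    (hz : F z ≠ ⊤) (hzc : (Jobj F A z).toReal ≤ c)
    (hdec : Jprox F A A' β z x ≤ Jprox F A A' β z z) :
    F x ≠ ⊤ ∧ F z' ≠ ⊤ ∧ (Jprox F A A' β z x).toReal ≤ (Jobj F A z).toReal ∧
      (Jobj F A z').toReal ≤ (1 - w) * (Jobj F A z).toReal +
        w * (Jprox F A A' β z x).toReal - w * ε / 2 * ‖x - z‖ ^ 2 := by
  rw [Jprox_self, ← coe_toReal_Jobj hz (hFnebot z)] at hdec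
  have hx : F x ≠ ⊤ := ne_top_of_Jprox_le hdec
  have hz'dom : F z' ≠ ⊤ := hz' ▸ hconv.1 hz hx (by linarith) hw0.le (by ring)
  have hba : (Jprox F A A' β z x).toReal ≤ (Jobj F A z).toReal := by
    rw [Jprox_eq_coe hx (hFnebot x), EReal.coe_le_coe_iff] at hdec
    rwa [toReal_Jprox hx (hFnebot x)]
  have hmx : m ≤ (F x).toReal := EReal.coe_le_coe_iff.1 ((hm x).trans (EReal.le_coe_toReal hx))
  have hball : z' ∈ closedBall z dd := by
    rw [mem_closedBall, dist_eq_norm, norm_sub_of_eq_convex_comb hz' hw0.le]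
    refine mul_le_of_le_div_sqrt hβ hw0 hw2 ?_
    rw [toReal_Jprox hx (hFnebot x)] at hba
    nlinarith [sq_nonneg ‖Alin A A' z x‖]
  have hfz' : (F z').toReal ≤ (1 - w) * (F z).toReal + w * (F x).toReal :=
    hz' ▸ hconv.2 hz hx (by linarith) hw0.le (by ring)
  refine ⟨hx, hz'dom, hba, ?_⟩
  rw [toReal_Jobj hz'dom (hFnebot z'), toReal_Jobj hz (hFnebot z), toReal_Jprox hx (hFnebot x)]
  exact descent_inequality (f := fun y => (F y).toReal) hz' hw0.le hw1 hwA hfz' (hAmax z' hz'dom)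
    (herr z' hball)

theorem iterate_mem_dom_and_Jobj_le {z xt : ℕ → EuclideanSpace ℝ (Fin N)} {dd m : ℝ}
    (hconv : ConvexOn ℝ {x | F x ≠ ⊤} fun x => (F x).toReal) (hFnebot : ∀ x, F x ≠ ⊥)
    (hm : ∀ x, (m : EReal) ≤ F x) (hAmax : ∀ x, F x ≠ ⊤ → ‖A x‖ ≤ Amax)
    (herr : ∀ y, Jobj F A y ≤ Jobj F A (z 0) → ∀ x ∈ closedBall y dd,
      ‖A x - Alin A A' y x‖ ≤ C * ‖x - y‖ ^ 2)
    (hβ : 0 < β) (hε : 0 < ε) (hw0 : 0 < w) (hw1 : w ≤ 1)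
    (hw2 : w ≤ dd / √(2 * β⁻¹ * ((Jobj F A (z 0)).toReal - m)))
    (hwA : 2 * C * Amax * w ≤ β - ε) (hrec : ∀ k, z (k + 1) = (1 - w) • z k + w • xt k)
    (hdec : ∀ k, Jprox F A A' β (z k) (xt k) ≤ Jprox F A A' β (z k) (z k))
    (hz0 : F (z 0) ≠ ⊤) (k : ℕ) :
    F (z k) ≠ ⊤ ∧ Jobj F A (z k) ≤ Jobj F A (z 0) := by
  induction k with
  | zero => exact ⟨hz0, le_rfl⟩
  | succ k ih =>
    obtain ⟨hdom, hlev⟩ := ih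
    obtain ⟨-, hdom', hba, hdesc⟩ := descent_step hconv hFnebot hm hAmax (herr _ hlev) hβ hw0
      hw1 hw2 hwA (hrec k) hdom ((Jobj_le_Jobj_iff hdom (hFnebot _) hz0 (hFnebot _)).1 hlev)
      (hdec k)
    refine ⟨hdom', le_trans ((Jobj_le_Jobj_iff hdom' (hFnebot _) hdom (hFnebot _)).2 ?_) hlev⟩
    have : 0 ≤ w * ε / 2 * ‖xt k - z k‖ ^ 2 := by positivity
    nlinarith

end Descent

section Critical

variable {N M : ℕ} {F : EuclideanSpace ℝ (Fin N) → EReal}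
  {A : EuclideanSpace ℝ (Fin N) → EuclideanSpace ℝ (Fin M)}
  {A' : EuclideanSpace ℝ (Fin N) → (EuclideanSpace ℝ (Fin N) →L[ℝ] EuclideanSpace ℝ (Fin M))}
  {β : ℝ} {p : EuclideanSpace ℝ (Fin N)}

theorem tendsto_Alin {ι : Type*} {l : Filter ι} {zs xs : ι → EuclideanSpace ℝ (Fin N)}
    {x : EuclideanSpace ℝ (Fin N)} (hA : Tendsto (fun k => A (zs k)) l (𝓝 (A p)))
    (hA' : Tendsto (fun k => A' (zs k)) l (𝓝 (A' p))) (hzs : Tendsto zs l (𝓝 p))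
    (hxs : Tendsto xs l (𝓝 x)) :
    Tendsto (fun k => Alin A A' (zs k) (xs k)) l (𝓝 (Alin A A' p x)) :=
  hA.add ((isBoundedBilinearMap_apply.continuous.tendsto _).comp (hA'.prodMk_nhds (hxs.sub hzs)))

theorem subgradient_of_isMinOn_Jprox
    (hconv : ConvexOn ℝ {x | F x ≠ ⊤} fun x => (F x).toReal) (hFnebot : ∀ x, F x ≠ ⊥)
    (hp : F p ≠ ⊤) (hmin : IsMinOn (Jprox F A A' β p) univ p) (y : EuclideanSpace ℝ (Fin N)) :
    F p + ((-⟪(ContinuousLinearMap.adjoint (A' p)) (A p), y - p⟫ : ℝ) : EReal) ≤ F y := by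
  by_cases hy : F y = ⊤
  · simp [hy]
  rw [← EReal.coe_toReal hp (hFnebot p), ← EReal.coe_toReal hy (hFnebot y), ← EReal.coe_add,
    EReal.coe_le_coe_iff, ContinuousLinearMap.adjoint_inner_left]
  suffices (F p).toReal - ⟪A p, A' p (y - p)⟫ - (F y).toReal ≤ 0 by linarith
  -- compare `p` with the points `p + t (y - p)` of the segment towards `y`, and let `t → 0`
  refine nonpos_of_forall_le_mul
    (c := 1 / 2 * ‖A' p (y - p)‖ ^ 2 + β / 2 * ‖y - p‖ ^ 2) fun t ht0 ht1 => ?_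
  set yt := (1 - t) • p + t • y
  have hdom : F yt ≠ ⊤ := hconv.1 hp hy (by linarith) ht0.le (by ring)
  have hfyt : (F yt).toReal ≤ (1 - t) * (F p).toReal + t * (F y).toReal :=
    hconv.2 hp hy (by linarith) ht0.le (by ring)
  have hstep : yt - p = t • (y - p) := by module
  have hmin_t : Jprox F A A' β p p ≤ Jprox F A A' β p yt := hmin (mem_univ yt)
  rw [Jprox_self, Jobj_eq_coe hp (hFnebot p), Jprox_eq_coe hdom (hFnebot yt),
    EReal.coe_le_coe_iff, Alin, hstep, map_smul, norm_add_sq_real, real_inner_smul_right,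
    norm_smul, norm_smul, Real.norm_of_nonneg ht0.le] at hmin_t
  have : t * ((F p).toReal - ⟪A p, A' p (y - p)⟫ - (F y).toReal) ≤
      t * (t * (1 / 2 * ‖A' p (y - p)‖ ^ 2 + β / 2 * ‖y - p‖ ^ 2)) := by
    nlinarith
  exact le_of_mul_le_mul_left this ht0

theorem le_toReal_Jprox_of_tendsto {zs xs es : ℕ → EuclideanSpace ℝ (Fin N)} {L : ℝ}
    (hFnebot : ∀ x, F x ≠ ⊥) (hAz : Tendsto (fun k => A (zs k)) atTop (𝓝 (A p)))
    (hA'z : Tendsto (fun k => A' (zs k)) atTop (𝓝 (A' p))) (hzs : Tendsto zs atTop (𝓝 p))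
    (hxs : Tendsto xs atTop (𝓝 p)) (hes : Tendsto es atTop (𝓝 0))
    (hxdom : ∀ k, F (xs k) ≠ ⊤)
    (hb : Tendsto (fun k => (Jprox F A A' β (zs k) (xs k)).toReal) atTop (𝓝 L))
    (hopt : ∀ k y, Jprox F A A' β (zs k) (xs k) + ((⟪es k, y - xs k⟫ : ℝ) : EReal) ≤
      Jprox F A A' β (zs k) y) {y : EuclideanSpace ℝ (Fin N)} (hy : F y ≠ ⊤) :
    L ≤ (Jprox F A A' β p y).toReal := by
  have hopt_y : ∀ k, (Jprox F A A' β (zs k) (xs k)).toReal + ⟪es k, y - xs k⟫ ≤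
      (Jprox F A A' β (zs k) y).toReal := fun k => by
    have h := hopt k y
    rw [Jprox_eq_coe (hxdom k) (hFnebot _), Jprox_eq_coe hy (hFnebot _), ← EReal.coe_add,
      EReal.coe_le_coe_iff] at h
    rwa [toReal_Jprox (hxdom k) (hFnebot _), toReal_Jprox hy (hFnebot _)]
  refine le_of_tendsto_of_tendsto' (by simpa using hb.add (hes.inner (hxs.const_sub y))) ?_
    hopt_y
  simp only [toReal_Jprox hy (hFnebot y)]
  exact ((((tendsto_Alin hAz hA'z hzs tendsto_const_nhds).norm.pow 2).const_mul _).add_const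
    _).add (((hzs.const_sub y).norm.pow 2).const_mul _)

theorem isMinOn_Jprox_of_tendsto {zs xs es : ℕ → EuclideanSpace ℝ (Fin N)} {c L : ℝ}
    (hFnebot : ∀ x, F x ≠ ⊥) (hFlsc : LowerSemicontinuous F)
    (hAcont : ∀ x, F x ≠ ⊤ → ContinuousAt A x) (hA'cont : ContinuousOn A' {x | F x ≠ ⊤})
    (hzs : Tendsto zs atTop (𝓝 p)) (hxs : Tendsto xs atTop (𝓝 p))
    (hes : Tendsto es atTop (𝓝 0)) (hzdom : ∀ k, F (zs k) ≠ ⊤) (hxdom : ∀ k, F (xs k) ≠ ⊤)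
    (hFc : ∀ k, F (zs k) ≤ c)
    (hb : Tendsto (fun k => (Jprox F A A' β (zs k) (xs k)).toReal) atTop (𝓝 L))
    (hopt : ∀ k y, Jprox F A A' β (zs k) (xs k) + ((⟪es k, y - xs k⟫ : ℝ) : EReal) ≤
      Jprox F A A' β (zs k) y) :
    F p ≠ ⊤ ∧ Jobj F A p = L ∧ IsMinOn (Jprox F A A' β p) univ p := by
  have hp : F p ≠ ⊤ := ne_top_of_le_ne_top (EReal.coe_ne_top c)
    ((hFlsc.isClosed_preimage c).mem_of_tendsto hzs (Eventually.of_forall hFc))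
  have hAz : Tendsto (fun k => A (zs k)) atTop (𝓝 (A p)) := (hAcont p hp).tendsto.comp hzs
  have hA'z : Tendsto (fun k => A' (zs k)) atTop (𝓝 (A' p)) :=
    (hA'cont p hp).tendsto.comp (tendsto_nhdsWithin_iff.2 ⟨hzs, Eventually.of_forall hzdom⟩)
  have hlower : ∀ y, F y ≠ ⊤ → L ≤ (Jprox F A A' β p y).toReal := fun y hy =>
    le_toReal_Jprox_of_tendsto hFnebot hAz hA'z hzs hxs hes hxdom hb hopt hy
  have hupper : (Jobj F A p).toReal ≤ L := by
    have hFx : Tendsto (fun k => (F (xs k)).toReal) atTop (𝓝 (L - 1 / 2 * ‖A p‖ ^ 2)) := by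
      have hAlin := ((tendsto_Alin hAz hA'z hzs hxs).norm.pow 2).const_mul (1 / 2 : ℝ)
      have hgap := ((hxs.sub hzs).norm.pow 2).const_mul (β / 2)
      rw [Alin, sub_self, map_zero, add_zero] at hAlin
      rw [sub_self, norm_zero, zero_pow two_ne_zero, mul_zero] at hgap
      have h := (hb.sub hAlin).sub hgap
      rw [sub_zero] at h
      refine h.congr fun k => ?_
      rw [toReal_Jprox (hxdom k) (hFnebot _)]
      ring
    have := hFlsc.le_of_tendsto hxs (EReal.tendsto_coe.2 hFx |>.congr fun k =>
      EReal.coe_toReal (hxdom k) (hFnebot _))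
    rw [← EReal.coe_toReal hp (hFnebot p), EReal.coe_le_coe_iff] at this
    rw [toReal_Jobj hp (hFnebot p)]
    linarith
  have hJp : Jobj F A p = L := by
    have h := hlower p hp
    rw [Jprox_self] at h
    rw [← coe_toReal_Jobj hp (hFnebot p), le_antisymm hupper h]
  refine ⟨hp, hJp, fun y _ => show Jprox F A A' β p p ≤ Jprox F A A' β p y from ?_⟩
  by_cases hy : F y = ⊤
  · rw [Jprox_eq_top hy]
    exact le_top
  · rw [Jprox_self, hJp, Jprox_eq_coe hy (hFnebot y), EReal.coe_le_coe_iff,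
      ← toReal_Jprox hy (hFnebot y)]
    exact hlower y hy

theorem mem_critical_of_mapClusterPt {z xt e : ℕ → EuclideanSpace ℝ (Fin N)} {c L : ℝ}
    (hconv : ConvexOn ℝ {x | F x ≠ ⊤} fun x => (F x).toReal) (hFnebot : ∀ x, F x ≠ ⊥)
    (hFlsc : LowerSemicontinuous F) (hAcont : ∀ x, F x ≠ ⊤ → ContinuousAt A x)
    (hA'cont : ContinuousOn A' {x | F x ≠ ⊤}) (hp : MapClusterPt p atTop z)
    (hd : Tendsto (fun k => ‖xt k - z k‖) atTop (𝓝 0)) (he0 : Tendsto e atTop (𝓝 0))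
    (hzdom : ∀ k, F (z k) ≠ ⊤) (hxdom : ∀ k, F (xt k) ≠ ⊤) (hFc : ∀ k, F (z k) ≤ c)
    (hb : Tendsto (fun k => (Jprox F A A' β (z k) (xt k)).toReal) atTop (𝓝 L))
    (he : ∀ k y, Jprox F A A' β (z k) (xt k) + ((⟪e k, y - xt k⟫ : ℝ) : EReal) ≤
      Jprox F A A' β (z k) y) :
    (∀ y, F p + ((-⟪(ContinuousLinearMap.adjoint (A' p)) (A p), y - p⟫ : ℝ) : EReal) ≤ F y) ∧
      Jobj F A p = L := by
  obtain ⟨ψ, hψ, hzψ⟩ := hp.tendsto_subseq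
  have hψ' := hψ.tendsto_atTop
  have hxψ : Tendsto (fun k => xt (ψ k)) atTop (𝓝 p) := by
    simpa using hzψ.add (tendsto_zero_iff_norm_tendsto_zero.2 (hd.comp hψ'))
  obtain ⟨hpdom, hJp, hmin⟩ := isMinOn_Jprox_of_tendsto (zs := z ∘ ψ) (xs := xt ∘ ψ) hFnebot
    hFlsc hAcont hA'cont hzψ hxψ (he0.comp hψ') (fun k => hzdom _) (fun k => hxdom _)
    (fun k => hFc _) (hb.comp hψ') (fun k => he (ψ k))
  exact ⟨subgradient_of_isMinOn_Jprox hconv hFnebot hpdom hmin, hJp⟩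

end Critical

theorem stmt_8_general {N M : ℕ}
    (F : EuclideanSpace ℝ (Fin N) → EReal)
    (A : EuclideanSpace ℝ (Fin N) → EuclideanSpace ℝ (Fin M))
    (A' : EuclideanSpace ℝ (Fin N) → (EuclideanSpace ℝ (Fin N) →L[ℝ] EuclideanSpace ℝ (Fin M)))
    -- Assumption 2.1
    (hFconv : ∀ x y : EuclideanSpace ℝ (Fin N), ∀ a b : ℝ, 0 ≤ a → 0 ≤ b → a + b = 1 →
      F (a • x + b • y) ≤ (a : EReal) * F x + (b : EReal) * F y)
    (hFnebot : ∀ x, F x ≠ ⊥)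
    (hFlsc : LowerSemicontinuous F)
    (hInf : ⊥ < ⨅ x, F x)
    (hderiv : ∀ x, F x ≠ ⊤ → HasFDerivAt A (A' x) x)
    (hA'cont : ContinuousOn A' {x | F x ≠ ⊤})
    (z xt : ℕ → EuclideanSpace ℝ (Fin N))
    (hz0 : F (z 0) ≠ ⊤)
    (hlev : IsBounded {x | Jobj F A x ≤ Jobj F A (z 0)})
    (Amax C dd : ℝ) (hC : 0 < C)
    (hAmax : ∀ x, F x ≠ ⊤ → ‖A x‖ ≤ Amax)
    (herr : ∀ y, Jobj F A y ≤ Jobj F A (z 0) → ∀ x ∈ closedBall y dd,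
      ‖A x - Alin A A' y x‖ ≤ C * ‖x - y‖ ^ 2)
    -- the step-size bound (2.3)
    (β ε w : ℝ) (hβ : 0 < β) (hε : 0 < ε)
    (hw0 : 0 < w) (hw1 : w ≤ 1)
    (hw2 : w ≤ dd / Real.sqrt (2 * β⁻¹ * (Jobj F A (z 0) - ⨅ x, F x).toReal))
    (hw3 : w ≤ (β - ε) / (2 * C * Amax))
    -- the iteration
    (hrec : ∀ k, z (k + 1) = (1 - w) • z k + w • xt k)
    (hdec : ∀ k, Jprox F A A' β (z k) (xt k) ≤ Jprox F A A' β (z k) (z k))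
    -- the inexact subdifferential condition: `e^k ∈ ∂J̃_{z^k}(x̃^k)` with `e^k → 0`
    (e : ℕ → EuclideanSpace ℝ (Fin N))
    (he : ∀ k y, Jprox F A A' β (z k) (xt k) + ((⟪e k, y - xt k⟫ : ℝ) : EReal)
      ≤ Jprox F A A' β (z k) y)
    (he0 : Tendsto e atTop (𝓝 0))
    -- the limit `L` and the critical level set `V_L = U₁ ∪ U₂`
    (L : EReal) (hL : Tendsto (fun k => Jobj F A (z k)) atTop (𝓝 L))
    (U₁ U₂ : Set (EuclideanSpace ℝ (Fin N)))
    (hU₁ : IsClosed U₁) (hU₂ : IsClosed U₂) (hUdisj : Disjoint U₁ U₂)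
    (hVL : {x | (∀ y, F x +
        ((-⟪(ContinuousLinearMap.adjoint (A' x)) (A x), y - x⟫ : ℝ) : EReal) ≤ F y) ∧
        Jobj F A x = L} = U₁ ∪ U₂) :
    ∀ xh₁ xh₂ : EuclideanSpace ℝ (Fin N),
      (∃ φ : ℕ → ℕ, StrictMono φ ∧ Tendsto (z ∘ φ) atTop (𝓝 xh₁)) →
      (∃ φ : ℕ → ℕ, StrictMono φ ∧ Tendsto (z ∘ φ) atTop (𝓝 xh₂)) →
      ¬(xh₁ ∈ U₁ ∧ xh₂ ∈ U₂) := by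
  rintro xh₁ xh₂ ⟨φ₁, hφ₁, h₁⟩ ⟨φ₂, hφ₂, h₂⟩
  have hconv := convexOn_toReal hFconv hFnebot
  obtain ⟨m, hm⟩ : ∃ m : ℝ, (⨅ x, F x) = m :=
    ⟨_, (EReal.coe_toReal (ne_top_of_le_ne_top hz0 (iInf_le F (z 0))) hInf.ne').symm⟩
  have hmF : ∀ x, (m : EReal) ≤ F x := fun x => hm ▸ iInf_le F x
  have hwA : 2 * C * Amax * w ≤ β - ε :=
    mul_le_of_pos_of_le_div hw0 (mul_nonneg (by positivity) ((norm_nonneg _).trans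
      (hAmax _ hz0))) hw3
  have hw2' : w ≤ dd / √(2 * β⁻¹ * ((Jobj F A (z 0)).toReal - m)) := by
    rwa [hm, ← coe_toReal_Jobj hz0 (hFnebot _), ← EReal.coe_sub, EReal.toReal_coe] at hw2
  have hinv := iterate_mem_dom_and_Jobj_le hconv hFnebot hmF hAmax herr hβ hε hw0 hw1 hw2' hwA
    hrec hdec hz0
  have hlevel k := (Jobj_le_Jobj_iff (hinv k).1 (hFnebot _) hz0 (hFnebot _)).1 (hinv k).2
  have hstep k := descent_step hconv hFnebot hmF hAmax (herr _ (hinv k).2) hβ hw0 hw1 hw2' hwA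
    (hrec k) (hinv k).1 (hlevel k) (hdec k)
  obtain ⟨ℓ, rfl, ha⟩ := exists_eq_coe_of_tendsto_coe
    (hL.congr fun k => (coe_toReal_Jobj (hinv k).1 (hFnebot _)).symm)
    (fun k => le_toReal_Jobj hmF (hinv k).1 (hFnebot _)) hlevel
  obtain ⟨hd, hb⟩ := tendsto_of_relaxed_descent hw0 (by positivity : 0 < w * ε / 2)
    (fun k => (hstep k).2.2.1) (fun k => (hstep k).2.2.2) ha
  refine not_mem_and_mem_of_mapClusterPt (hlev.subset (range_subset_iff.2 fun k => (hinv k).2))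
    (by simpa [dist_eq_norm, norm_sub_of_eq_convex_comb (hrec _) hw0.le] using hd.const_mul w)
    hU₁ hU₂ hUdisj (fun p hp => hVL ▸ ?_) (h₁.mapClusterPt.of_comp hφ₁.tendsto_atTop)
    (h₂.mapClusterPt.of_comp hφ₂.tendsto_atTop)
  exact mem_critical_of_mapClusterPt hconv hFnebot hFlsc (fun x hx => (hderiv x hx).continuousAt)
    hA'cont hp hd he0 (fun k => (hinv k).1) (fun k => (hstep k).1)
    (fun k => (le_Jobj.trans (hinv k).2).trans (coe_toReal_Jobj hz0 (hFnebot _)).ge) hb he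

/-- Theorem 2.1(iii): if the critical level set `V_L` is the union of two disjoint
closed sets `U₁, U₂`, then no two accumulation points of `(z^k)` lie in different
ones of these sets. -/
theorem stmt_8 {N M : ℕ}
    (F : EuclideanSpace ℝ (Fin N) → EReal)
    (A : EuclideanSpace ℝ (Fin N) → EuclideanSpace ℝ (Fin M))
    (A' : EuclideanSpace ℝ (Fin N) → (EuclideanSpace ℝ (Fin N) →L[ℝ] EuclideanSpace ℝ (Fin M)))
    -- Assumption 2.1
    (hFconv : ∀ x y : EuclideanSpace ℝ (Fin N), ∀ a b : ℝ, 0 ≤ a → 0 ≤ b → a + b = 1 →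
      F (a • x + b • y) ≤ (a : EReal) * F x + (b : EReal) * F y)
    (hFproper : ∃ x, F x ≠ ⊤)
    (hFnebot : ∀ x, F x ≠ ⊥)
    (hFlsc : LowerSemicontinuous F)
    (hInf : ⊥ < ⨅ x, F x)
    (hderiv : ∀ x, F x ≠ ⊤ → HasFDerivAt A (A' x) x)
    (hA'cont : ContinuousOn A' {x | F x ≠ ⊤})
    (z xt : ℕ → EuclideanSpace ℝ (Fin N))
    (hz0 : F (z 0) ≠ ⊤)
    (hlev : IsBounded {x | Jobj F A x ≤ Jobj F A (z 0)})
    (Amax C dd : ℝ) (hC : 0 < C) (hdd : 0 < dd)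
    (hAmax : ∀ x, F x ≠ ⊤ → ‖A x‖ ≤ Amax)
    (herr : ∀ y, Jobj F A y ≤ Jobj F A (z 0) → ∀ x ∈ closedBall y dd,
      ‖A x - Alin A A' y x‖ ≤ C * ‖x - y‖ ^ 2)
    -- the step-size bound (2.3)
    (β ε w : ℝ) (hβ : 0 < β) (hε : 0 < ε)
    (hw0 : 0 < w) (hw1 : w ≤ 1)
    (hw2 : w ≤ dd / Real.sqrt (2 * β⁻¹ * (Jobj F A (z 0) - ⨅ x, F x).toReal))
    (hw3 : w ≤ (β - ε) / (2 * C * Amax))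
    -- the iteration
    (hrec : ∀ k, z (k + 1) = (1 - w) • z k + w • xt k)
    (hdec : ∀ k, Jprox F A A' β (z k) (xt k) ≤ Jprox F A A' β (z k) (z k))
    -- the inexact subdifferential condition: `e^k ∈ ∂J̃_{z^k}(x̃^k)` with `e^k → 0`
    (e : ℕ → EuclideanSpace ℝ (Fin N))
    (he : ∀ k y, Jprox F A A' β (z k) (xt k) + ((⟪e k, y - xt k⟫ : ℝ) : EReal)
      ≤ Jprox F A A' β (z k) y)
    (he0 : Tendsto e atTop (𝓝 0))
    -- the limit `L` and the critical level set `V_L = U₁ ∪ U₂`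
    (L : EReal) (hL : Tendsto (fun k => Jobj F A (z k)) atTop (𝓝 L))
    (U₁ U₂ : Set (EuclideanSpace ℝ (Fin N)))
    (hU₁ : IsClosed U₁) (hU₂ : IsClosed U₂) (hUdisj : Disjoint U₁ U₂)
    (hVL : {x | (∀ y, F x +
        ((-⟪(ContinuousLinearMap.adjoint (A' x)) (A x), y - x⟫ : ℝ) : EReal) ≤ F y) ∧
        Jobj F A x = L} = U₁ ∪ U₂) :
    ∀ xh₁ xh₂ : EuclideanSpace ℝ (Fin N),
      (∃ φ : ℕ → ℕ, StrictMono φ ∧ Tendsto (z ∘ φ) atTop (𝓝 xh₁)) →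
      (∃ φ : ℕ → ℕ, StrictMono φ ∧ Tendsto (z ∘ φ) atTop (𝓝 xh₂)) →
      ¬(xh₁ ∈ U₁ ∧ xh₂ ∈ U₂) :=
  stmt_8_general F A A' hFconv hFnebot hFlsc hInf hderiv hA'cont z xt hz0 hlev Amax C dd hC hAmax
    herr β ε w hβ hε hw0 hw1 hw2 hw3 hrec hdec e he he0 L hL U₁ U₂ hU₁ hU₂ hUdisj hVL
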